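/- For every c ∈ ℝ, the sphere S in ℝ³ with center (0,0,c) and radius √(1+c²) is a sphere of symmetry for π(𝒞): the inversion ψ_S(p) = (1+c²)(p−(0,0,c))/|p−(0,0,c)|² + (0,0,c) maps π(𝒞) onto itself. -/

import Mathlib

/-- The Clifford torus in S³ ⊂ ℝ⁴. -/
noncomputable def cliffordTorus : Set (ℝ × ℝ × ℝ × ℝ) :=
  {x | x.1 ^ 2 + x.2.1 ^ 2 = 1 / 2 ∧ x.2.2.1 ^ 2 + x.2.2.2 ^ 2 = 1 / 2}

/-- Stereographic projection S³ ∖ {(0,0,0,1)} → ℝ³. -/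
noncomputable def stereo4 (x : ℝ × ℝ × ℝ × ℝ) : ℝ × ℝ × ℝ :=
  (x.1 / (1 - x.2.2.2), x.2.1 / (1 - x.2.2.2), x.2.2.1 / (1 - x.2.2.2))

/-- Inversion in the sphere of center (0,0,c) and radius √(1+c²). -/
noncomputable def sphereInv (c : ℝ) (p : ℝ × ℝ × ℝ) : ℝ × ℝ × ℝ :=
  ((1 + c ^ 2) * p.1 / (p.1 ^ 2 + p.2.1 ^ 2 + (p.2.2 - c) ^ 2),
   (1 + c ^ 2) * p.2.1 / (p.1 ^ 2 + p.2.1 ^ 2 + (p.2.2 - c) ^ 2),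
   (1 + c ^ 2) * (p.2.2 - c) / (p.1 ^ 2 + p.2.1 ^ 2 + (p.2.2 - c) ^ 2) + c)

/-!
Stereographic projection conjugates the reflection of S³ in the hyperplane `w = c z` to the
inversion in the sphere of center `(0,0,c)` and radius `√(1+c²)`, the image of the great sphere
cut out by that hyperplane. The reflection fixes `x, y` and acts on the `(z, w)`-plane as the
reflection in the line spanned by `(1, c)`, so it preserves `z² + w²` and, being an involution,
maps the Clifford torus onto itself.
-/

theorem Function.Involutive.image_eq_of_mapsTo {α : Type*} {f : α → α} (hf : f.Involutive)
    {s : Set α} (hs : Set.MapsTo f s s) : f '' s = s :=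
  (Set.LeftInvOn.surjOn (fun x _ ↦ hf x) hs).image_eq_of_mapsTo hs

/-- The reflection of ℝ⁴ in the hyperplane `w = c z`. -/
noncomputable def hyperplaneReflection (c : ℝ) (x : ℝ × ℝ × ℝ × ℝ) : ℝ × ℝ × ℝ × ℝ :=
  (x.1, x.2.1, ((1 - c ^ 2) * x.2.2.1 + 2 * c * x.2.2.2) / (1 + c ^ 2),
   (2 * c * x.2.2.1 - (1 - c ^ 2) * x.2.2.2) / (1 + c ^ 2))

namespace hyperplaneReflection

variable (c : ℝ)

theorem involutive : (hyperplaneReflection c).Involutive := by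
  rintro ⟨a, b, z, w⟩
  have hc : (1 : ℝ) + c ^ 2 ≠ 0 := by positivity
  simp only [hyperplaneReflection, Prod.mk.injEq, true_and]
  constructor <;> field_simp <;> ring

theorem sq_add_sq (x : ℝ × ℝ × ℝ × ℝ) :
    (hyperplaneReflection c x).2.2.1 ^ 2 + (hyperplaneReflection c x).2.2.2 ^ 2
      = x.2.2.1 ^ 2 + x.2.2.2 ^ 2 := by
  have hc : (1 : ℝ) + c ^ 2 ≠ 0 := by positivity
  simp only [hyperplaneReflection]
  field_simp
  ring

theorem mapsTo_cliffordTorus :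
    Set.MapsTo (hyperplaneReflection c) cliffordTorus cliffordTorus :=
  fun x ⟨hab, hzw⟩ ↦ ⟨hab, (sq_add_sq c x).trans hzw⟩

end hyperplaneReflection

theorem sphereInv_stereo4 (c : ℝ) {x : ℝ × ℝ × ℝ × ℝ}
    (hx : x.1 ^ 2 + x.2.1 ^ 2 + x.2.2.1 ^ 2 + x.2.2.2 ^ 2 = 1) (hw : x.2.2.2 ≠ 1)
    (hw' : (hyperplaneReflection c x).2.2.2 ≠ 1) :
    sphereInv c (stereo4 x) = stereo4 (hyperplaneReflection c x) := by
  obtain ⟨a, b, z, w⟩ := x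
  have hc : (1 : ℝ) + c ^ 2 ≠ 0 := by positivity
  have hs : 1 - w ≠ 0 := sub_ne_zero.mpr hw.symm
  set K := 1 + c ^ 2 + (1 - c ^ 2) * w - 2 * c * z
  have one_sub_w' : 1 - (hyperplaneReflection c (a, b, z, w)).2.2.2 = K / (1 + c ^ 2) := by
    simp only [hyperplaneReflection, K]
    field_simp
    ring
  have hK : K ≠ 0 := by
    have : K = (1 + c ^ 2) * (1 - (hyperplaneReflection c (a, b, z, w)).2.2.2) := by
      rw [one_sub_w']
      field_simp
    exact this ▸ mul_ne_zero hc (sub_ne_zero.mpr hw'.symm)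
  have dist_sq : (a / (1 - w)) ^ 2 + (b / (1 - w)) ^ 2 + (z / (1 - w) - c) ^ 2 = K / (1 - w) := by
    field_simp
    linear_combination hx
  simp only [sphereInv, stereo4, dist_sq, one_sub_w']
  simp only [hyperplaneReflection, Prod.mk.injEq]
  refine ⟨?_, ?_, ?_⟩ <;> field_simp
  ring

theorem sphereInv_stereo4_of_mem_cliffordTorus (c : ℝ) {x : ℝ × ℝ × ℝ × ℝ}
    (hx : x ∈ cliffordTorus) :
    sphereInv c (stereo4 x) = stereo4 (hyperplaneReflection c x) := by
  have w_ne_one {y : ℝ × ℝ × ℝ × ℝ} (hy : y ∈ cliffordTorus) : y.2.2.2 ≠ 1 := by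
    intro h
    nlinarith [hy.2, sq_nonneg y.2.2.1]
  exact sphereInv_stereo4 c (by linear_combination hx.1 + hx.2) (w_ne_one hx)
    (w_ne_one (hyperplaneReflection.mapsTo_cliffordTorus c hx))

/-- For every c ∈ ℝ, the sphere of center (0,0,c) and radius √(1+c²) is a sphere
    of symmetry for the stereographic projection of the Clifford torus. -/
theorem sphereInv_preserves_stereo_clifford (c : ℝ) :
    sphereInv c '' (stereo4 '' cliffordTorus) = stereo4 '' cliffordTorus := by
  calc sphereInv c '' (stereo4 '' cliffordTorus)
      = stereo4 '' (hyperplaneReflection c '' cliffordTorus) := by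
        rw [Set.image_image, Set.image_image]
        exact Set.image_congr fun x hx ↦ sphereInv_stereo4_of_mem_cliffordTorus c hx
    _ = stereo4 '' cliffordTorus := by
        rw [(hyperplaneReflection.involutive c).image_eq_of_mapsTo
          (hyperplaneReflection.mapsTo_cliffordTorus c)]
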